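/- arXiv:1602.08590 — 3 statements merged into one kernel-verified Lean document; each statement's English description precedes it below -/
import Mathlib

section
/- Let p(x) = exp(-g(x))/Z be a log-concave probability density on ℝⁿ with g convex attaining its minimum at x̂. Then the expectation of g under p satisfies E[g(x)] ≤ g(x̂) + n. -/
/-!
Dilating about a point `y` by a factor `l > 1` multiplies `∫ exp (-g)` by `l ^ n`. Convexity gives
`g (l⁻¹ • x + (1 - l⁻¹) • y) ≤ g x - (1 - l⁻¹) (g x - g y)`, and `1 + t ≤ exp t` then bounds the
dilated integrand below by `exp (-g x) (1 + (1 - l⁻¹) (g x - g y))`. Integrating,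
`(1 - l⁻¹) (E[g] - g y) ≤ l ^ n - 1`, and dividing by `1 - l⁻¹` and letting `l → 1⁺` leaves `n`.
-/

open MeasureTheory Real Filter Topology Module

namespace MeasureTheory

variable {E F : Type*} [NormedAddCommGroup E] [NormedSpace ℝ E] [FiniteDimensional ℝ E]
  [MeasurableSpace E] [BorelSpace E] (μ : Measure E) [μ.IsAddHaarMeasure]
  [NormedAddCommGroup F]

theorem Measure.integral_comp_inv_smul_add [NormedSpace ℝ F] (f : E → F) {R : ℝ} (hR : 0 ≤ R)
    (b : E) :
    ∫ x, f (R⁻¹ • x + b) ∂μ = R ^ finrank ℝ E • ∫ x, f x ∂μ := by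
  rw [Measure.integral_comp_inv_smul_of_nonneg μ (fun y => f (y + b)) hR,
    integral_add_right_eq_self]

theorem Integrable.comp_inv_smul_add {f : E → F} (hf : Integrable f μ) {R : ℝ} (hR : R ≠ 0)
    (b : E) : Integrable (fun x => f (R⁻¹ • x + b)) μ :=
  (hf.comp_add_right b).comp_smul (inv_ne_zero hR)

end MeasureTheory

theorem ConvexOn.exp_neg_mul_one_add_le {E : Type*} [AddCommGroup E] [Module ℝ E] {s : Set E}
    {g : E → ℝ} (hg : ConvexOn ℝ s g) {x y : E} (hx : x ∈ s) (hy : y ∈ s) {l : ℝ} (hl : 1 ≤ l) :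
    exp (-g x) * (1 + (1 - l⁻¹) * (g x - g y)) ≤ exp (-g (l⁻¹ • x + (1 - l⁻¹) • y)) := by
  have hconv : g (l⁻¹ • x + (1 - l⁻¹) • y) ≤ l⁻¹ * g x + (1 - l⁻¹) * g y :=
    hg.2 hx hy (by positivity) (sub_nonneg.2 (inv_le_one_of_one_le₀ hl)) (by ring)
  calc exp (-g x) * (1 + (1 - l⁻¹) * (g x - g y))
      ≤ exp (-g x) * exp ((1 - l⁻¹) * (g x - g y)) := by
        gcongr
        linarith [add_one_le_exp ((1 - l⁻¹) * (g x - g y))]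
    _ = exp (-(l⁻¹ * g x + (1 - l⁻¹) * g y)) := by rw [← exp_add]; ring_nf
    _ ≤ exp (-g (l⁻¹ • x + (1 - l⁻¹) • y)) := exp_le_exp.2 (neg_le_neg hconv)

theorem le_natCast_mul_of_forall_one_sub_inv_mul_le {D Z : ℝ} {n : ℕ}
    (h : ∀ l : ℝ, 1 < l → (1 - l⁻¹) * D ≤ (l ^ n - 1) * Z) : D ≤ n * Z := by
  have hbound : ∀ l : ℝ, 1 < l → D ≤ l * (∑ k ∈ Finset.range n, l ^ k) * Z := by
    intro l hl
    have hl0 : 0 < l - 1 := sub_pos.2 hl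
    have hscaled : (l - 1) * D ≤ (l - 1) * (l * (∑ k ∈ Finset.range n, l ^ k) * Z) := by
      have := mul_le_mul_of_nonneg_left (h l hl) (by positivity : (0 : ℝ) ≤ l)
      rw [← geom_sum_mul] at this
      field_simp at this ⊢
      linarith
    exact le_of_mul_le_mul_left hscaled hl0
  have hlim : Tendsto (fun l : ℝ => l * (∑ k ∈ Finset.range n, l ^ k) * Z) (𝓝[>] 1)
      (𝓝 (n * Z)) := by
    have hcont : Continuous fun l : ℝ => l * (∑ k ∈ Finset.range n, l ^ k) * Z := by fun_prop
    simpa using (hcont.tendsto 1).mono_left nhdsWithin_le_nhds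
  exact ge_of_tendsto hlim (eventually_nhdsWithin_of_forall hbound)

section HaarMeasure

variable {E : Type*} [NormedAddCommGroup E] [NormedSpace ℝ E] [FiniteDimensional ℝ E]
  [MeasurableSpace E] [BorelSpace E] {μ : Measure E} [μ.IsAddHaarMeasure] {g : E → ℝ}

theorem ConvexOn.one_sub_inv_mul_integral_mul_exp_neg_sub_le (hg : ConvexOn ℝ Set.univ g)
    (hexp : Integrable (fun x => exp (-g x)) μ) (hgexp : Integrable (fun x => g x * exp (-g x)) μ)
    (y : E) {l : ℝ} (hl : 1 ≤ l) :
    (1 - l⁻¹) * (∫ x, g x * exp (-g x) ∂μ - g y * ∫ x, exp (-g x) ∂μ)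
      ≤ (l ^ finrank ℝ E - 1) * ∫ x, exp (-g x) ∂μ := by
  have hexpand : (fun x => exp (-g x) * (1 + (1 - l⁻¹) * (g x - g y)))
      = fun x => (1 - (1 - l⁻¹) * g y) * exp (-g x) + (1 - l⁻¹) * (g x * exp (-g x)) := by
    ext x; ring
  have hlower : Integrable (fun x => exp (-g x) * (1 + (1 - l⁻¹) * (g x - g y))) μ := by
    rw [hexpand]
    exact (hexp.const_mul _).add (hgexp.const_mul _)
  have hmono := integral_mono hlower
    (hexp.comp_inv_smul_add μ (by positivity : l ≠ 0) ((1 - l⁻¹) • y))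
    fun x => hg.exp_neg_mul_one_add_le (Set.mem_univ x) (Set.mem_univ y) hl
  rw [hexpand, integral_add (hexp.const_mul _) (hgexp.const_mul _), integral_const_mul,
    integral_const_mul, Measure.integral_comp_inv_smul_add μ (fun z => exp (-g z))
      (by positivity : (0 : ℝ) ≤ l), smul_eq_mul] at hmono
  linarith

theorem ConvexOn.integral_mul_exp_neg_le (hg : ConvexOn ℝ Set.univ g)
    (hexp : Integrable (fun x => exp (-g x)) μ) (hgexp : Integrable (fun x => g x * exp (-g x)) μ)
    (y : E) :
    ∫ x, g x * exp (-g x) ∂μ ≤ (g y + finrank ℝ E) * ∫ x, exp (-g x) ∂μ := by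
  have := le_natCast_mul_of_forall_one_sub_inv_mul_le fun l hl =>
    hg.one_sub_inv_mul_integral_mul_exp_neg_sub_le hexp hgexp y hl.le
  linarith

end HaarMeasure

theorem expectation_le_min_add_dim_general
    (n : ℕ) (g : (Fin n → ℝ) → ℝ) (hg : ConvexOn ℝ Set.univ g)
    (Z : ℝ) (hZpos : 0 < Z)
    (hZ : Z = ∫ x : Fin n → ℝ, Real.exp (-g x))
    (xhat : Fin n → ℝ)
    (hint : Integrable (fun x : Fin n → ℝ => g x * (Real.exp (-g x) / Z))) :
    (∫ x : Fin n → ℝ, g x * (Real.exp (-g x) / Z)) ≤ g xhat + n := by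
  have hexp : Integrable (fun x : Fin n → ℝ => exp (-g x)) :=
    Integrable.of_integral_ne_zero (hZ ▸ hZpos.ne')
  have hgexp : Integrable (fun x : Fin n → ℝ => g x * exp (-g x)) := by
    have : (fun x : Fin n → ℝ => g x * exp (-g x)) = fun x => Z * (g x * (exp (-g x) / Z)) := by
      ext x; field_simp
    rw [this]
    exact hint.const_mul Z
  have hbound := hg.integral_mul_exp_neg_le hexp hgexp xhat
  rw [Module.finrank_fin_fun, ← hZ] at hbound
  simp_rw [← mul_div_assoc]
  rw [integral_div, div_le_iff₀ hZpos]
  exact hbound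

/-- Bobkov–Madiman mean bound: for a log-concave probability density
`p(x) = exp(-g x)/Z` on ℝⁿ with `g` convex minimized at `x̂`,
the expectation of `g` under `p` is at most `g x̂ + n`. -/
theorem expectation_le_min_add_dim
    (n : ℕ) (g : (Fin n → ℝ) → ℝ) (hg : ConvexOn ℝ Set.univ g)
    (Z : ℝ) (hZpos : 0 < Z)
    (hZ : Z = ∫ x : Fin n → ℝ, Real.exp (-g x))
    (hprob : ∫ x : Fin n → ℝ, Real.exp (-g x) / Z = 1)
    (xhat : Fin n → ℝ) (hmin : ∀ x, g xhat ≤ g x)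
    (hint : Integrable (fun x : Fin n → ℝ => g x * (Real.exp (-g x) / Z))) :
    (∫ x : Fin n → ℝ, g x * (Real.exp (-g x) / Z)) ≤ g xhat + n :=
  expectation_le_min_add_dim_general n g hg Z hZpos hZ xhat hint
end

section
/- Let p(x|y) = exp(-g(x))/Z be a log-concave posterior density on ℝⁿ with MAP estimator x̂ minimizing g, and let γ_α be the HPD threshold, i.e. P(g(X) ≤ γ_α) = 1 − α. Assume the concentration bound P(g(X) ≥ E[g(X)] + τn) ≤ 3·exp(−τ²n/16) holds for all τ ∈ [0,2], and E[g(X)] ≤ g(x̂) + n. Then for α ∈ (4·exp(−n/3), 1), with τ_α = √(16·log(3/α)/n), the set C̃_α = {x : g(x) ≤ g(x̂) + n(τ_α + 1)} satisfies P(X ∈ C̃_α) ≥ 1 − α, and consequently the HPD region C*_α = {x : g(x) ≤ γ_α} is contained in C̃_α. -/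
/-!
Convexity along rays from `x̂` gives `c · g x ≤ g (x̂ + c • (x - x̂)) + (c - 1) · g x̂` for `c ≥ 1`,
so the change of variables `y = x̂ + c • (x - x̂)` shows that the flattened weight
`exp (-(g + (c - 1) g x̂) / c)` has total mass at most `cⁿ ∫ exp (-g)`. On `{g > g x̂ + r}` the
weight `exp (-g)` is at most `e^{-r(c-1)/c}` times the flattened one, whence
`P(g X > g x̂ + r) ≤ cⁿ e^{-r(c-1)/c}`. With `c = 1 + τ_α` and `r = n c` this is
`(1 + τ)ⁿ e^{-nτ} ≤ e^{-nτ²/16} = α / 3`, using `log (1 + τ) ≤ τ - τ² / 16` for `0 ≤ τ ≤ 8` and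
`τ_α² < 16 / 3`, which is what the lower bound on `α` provides.

For the HPD region: the posterior density is positive and `g` is continuous, so if a point of
`{g ≤ γ_α}` had `g > T := g x̂ + n(τ_α + 1)`, the intermediate value theorem between `x̂` and that
point would make the open set `{T < g < γ_α}` nonempty, hence of positive mass, contradicting
`P(g ≤ γ_α) = 1 - α ≤ P(g ≤ T)`.
-/

open MeasureTheory Real Set Module
open scoped ENNReal

section Homothety

variable {E : Type*} [NormedAddCommGroup E] [NormedSpace ℝ E] [FiniteDimensional ℝ E]
  [MeasurableSpace E] [BorelSpace E] (μ : Measure E) [μ.IsAddHaarMeasure]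

theorem map_homothety_addHaar (x : E) {c : ℝ} (hc : c ≠ 0) :
    μ.map (AffineMap.homothety x c) = ENNReal.ofReal |(c ^ finrank ℝ E)⁻¹| • μ := by
  ext s hs
  have hinv (a b : ℝ) (hab : a * b = 1) (y : E) :
      AffineMap.homothety x a (AffineMap.homothety x b y) = y := by
    rw [← AffineMap.homothety_mul_apply, hab, AffineMap.homothety_one, AffineMap.id_apply]
  rw [Measure.map_apply (AffineMap.homothety_continuous x c).measurable hs,
    ← image_eq_preimage_of_inverse (hinv _ _ (mul_inv_cancel₀ hc))
      (hinv _ _ (inv_mul_cancel₀ hc)),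
    Measure.addHaar_image_homothety, inv_pow, Measure.smul_apply, smul_eq_mul]

theorem lintegral_comp_homothety (x : E) {c : ℝ} (hc : c ≠ 0) {f : E → ℝ≥0∞}
    (hf : Measurable f) :
    ∫⁻ y, f (AffineMap.homothety x c y) ∂μ =
      ENNReal.ofReal |(c ^ finrank ℝ E)⁻¹| * ∫⁻ y, f y ∂μ := by
  rw [← lintegral_map hf (AffineMap.homothety_continuous x c).measurable,
    map_homothety_addHaar μ x hc, lintegral_smul_measure, smul_eq_mul]

end Homothety

theorem ConvexOn.mul_le_homothety_add {E : Type*} [AddCommGroup E] [Module ℝ E] {g : E → ℝ}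
    (hg : ConvexOn ℝ univ g) (x₀ x : E) {c : ℝ} (hc : 1 ≤ c) :
    c * g x ≤ g (AffineMap.homothety x₀ c x) + (c - 1) * g x₀ := by
  have hc0 : 0 < c := by linarith
  have hx : (1 / c) • AffineMap.homothety x₀ c x + (1 - 1 / c) • x₀ = x := by
    rw [AffineMap.homothety_apply, vsub_eq_sub, vadd_eq_add]
    match_scalars <;> field_simp
    ring
  have h := hg.2 (mem_univ (AffineMap.homothety x₀ c x)) (mem_univ x₀)
    (by positivity : (0 : ℝ) ≤ 1 / c) (by rw [sub_nonneg, div_le_one hc0]; exact hc)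
    (add_sub_cancel _ _)
  rw [hx, smul_eq_mul, smul_eq_mul] at h
  calc c * g x ≤ c * (1 / c * g (AffineMap.homothety x₀ c x) + (1 - 1 / c) * g x₀) :=
        mul_le_mul_of_nonneg_left h hc0.le
    _ = g (AffineMap.homothety x₀ c x) + (c - 1) * g x₀ := by field_simp

section LogConcave

variable {E : Type*} [NormedAddCommGroup E] [NormedSpace ℝ E] [FiniteDimensional ℝ E]
  [MeasurableSpace E] [BorelSpace E] {μ : Measure E} [μ.IsAddHaarMeasure] {g : E → ℝ} {c : ℝ}

theorem ConvexOn.lintegral_exp_neg_div_le (hg : ConvexOn ℝ univ g) (hgc : Continuous g)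
    (x₀ : E) (hc : 1 ≤ c) :
    ∫⁻ y, ENNReal.ofReal (exp (-((g y + (c - 1) * g x₀) / c))) ∂μ ≤
      ENNReal.ofReal (c ^ finrank ℝ E) * ∫⁻ x, ENNReal.ofReal (exp (-g x)) ∂μ := by
  have hc0 : 0 < c := by linarith
  have hmeas : Measurable fun y => ENNReal.ofReal (exp (-((g y + (c - 1) * g x₀) / c))) := by
    have := hgc.measurable
    fun_prop
  calc ∫⁻ y, ENNReal.ofReal (exp (-((g y + (c - 1) * g x₀) / c))) ∂μ
      = ENNReal.ofReal (c ^ finrank ℝ E) * ∫⁻ x, ENNReal.ofReal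
          (exp (-((g (AffineMap.homothety x₀ c x) + (c - 1) * g x₀) / c))) ∂μ := by
        rw [lintegral_comp_homothety μ x₀ hc0.ne' hmeas, ← mul_assoc,
          ← ENNReal.ofReal_mul (by positivity), abs_of_pos (by positivity),
          mul_inv_cancel₀ (by positivity), ENNReal.ofReal_one, one_mul]
    _ ≤ ENNReal.ofReal (c ^ finrank ℝ E) * ∫⁻ x, ENNReal.ofReal (exp (-g x)) ∂μ := by
        gcongr with x
        rw [le_div_iff₀ hc0, mul_comm]
        exact hg.mul_le_homothety_add x₀ x hc

theorem ConvexOn.setLIntegral_exp_neg_tail_le (hg : ConvexOn ℝ univ g) (hgc : Continuous g)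
    (x₀ : E) (hc : 1 ≤ c) (r : ℝ) :
    ∫⁻ y in {y | g x₀ + r < g y}, ENNReal.ofReal (exp (-g y)) ∂μ ≤
      ENNReal.ofReal (c ^ finrank ℝ E * exp (-(r * (c - 1) / c))) *
        ∫⁻ y, ENNReal.ofReal (exp (-g y)) ∂μ := by
  have hc0 : 0 < c := by linarith
  set F := fun y => ENNReal.ofReal (exp (-((g y + (c - 1) * g x₀) / c)))
  have hmeas : Measurable F := by
    have := hgc.measurable
    fun_prop
  calc ∫⁻ y in {y | g x₀ + r < g y}, ENNReal.ofReal (exp (-g y)) ∂μ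
      ≤ ∫⁻ y in {y | g x₀ + r < g y}, ENNReal.ofReal (exp (-(r * (c - 1) / c))) * F y ∂μ := by
        refine setLIntegral_mono (hmeas.const_mul _) fun y hy => ?_
        rw [← ENNReal.ofReal_mul (exp_nonneg _), ← exp_add]
        gcongr
        rw [← neg_add, neg_le_neg_iff, ← add_div, div_le_iff₀ hc0]
        nlinarith [show g x₀ + r < g y from hy]
    _ ≤ ∫⁻ y, ENNReal.ofReal (exp (-(r * (c - 1) / c))) * F y ∂μ :=
        setLIntegral_le_lintegral _ _
    _ = ENNReal.ofReal (exp (-(r * (c - 1) / c))) * ∫⁻ y, F y ∂μ :=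
        lintegral_const_mul _ hmeas
    _ ≤ ENNReal.ofReal (exp (-(r * (c - 1) / c))) *
          (ENNReal.ofReal (c ^ finrank ℝ E) * ∫⁻ y, ENNReal.ofReal (exp (-g y)) ∂μ) := by
        gcongr
        exact hg.lintegral_exp_neg_div_le hgc x₀ hc
    _ = _ := by
        rw [ENNReal.ofReal_mul (by positivity), ← mul_assoc, mul_comm (ENNReal.ofReal (exp _))]

theorem ConvexOn.withDensity_exp_neg_div_tail_le (hg : ConvexOn ℝ univ g) (hgc : Continuous g)
    (x₀ : E) (hc : 1 ≤ c) {Z : ℝ} (hZ : 0 < Z) (r : ℝ) :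
    μ.withDensity (fun x => ENNReal.ofReal (exp (-g x) / Z)) {y | g x₀ + r < g y} ≤
      ENNReal.ofReal (c ^ finrank ℝ E * exp (-(r * (c - 1) / c))) *
        μ.withDensity (fun x => ENNReal.ofReal (exp (-g x) / Z)) univ := by
  have hdensity (x : E) : exp (-g x) / Z = exp (-(g x + log Z)) := by
    rw [neg_add, exp_add, exp_neg (log Z), exp_log hZ, div_eq_mul_inv]
  have hS : MeasurableSet {y | g x₀ + r < g y} := measurableSet_lt measurable_const hgc.measurable
  simp only [hdensity, withDensity_apply _ hS, withDensity_apply _ MeasurableSet.univ,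
    Measure.restrict_univ]
  convert (hg.add_const (log Z)).setLIntegral_exp_neg_tail_le (μ := μ) (g := fun x => g x + log Z)
    (hgc.add continuous_const) x₀ hc r using 4
  ext y
  exact ⟨fun h => by linarith, fun h => by linarith⟩

end LogConcave

theorem one_add_le_exp_sub_sq_div_sixteen {τ : ℝ} (h0 : 0 ≤ τ) (h8 : τ ≤ 8) :
    1 + τ ≤ exp (τ - τ ^ 2 / 16) := by
  set y := τ - τ ^ 2 / 16 with hy_def
  have hy : τ / 2 ≤ y := by rw [hy_def]; nlinarith
  have h1 : 1 + y / 2 ≤ exp (y / 2) := by linarith [add_one_le_exp (y / 2)]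
  have h2 : exp (y / 2) * exp (y / 2) = exp y := by rw [← exp_add, add_halves]
  nlinarith [mul_le_mul h1 h1 (by linarith) (exp_nonneg (y / 2))]

theorem one_add_pow_mul_exp_neg_le (n : ℕ) {τ : ℝ} (h0 : 0 ≤ τ) (h8 : τ ≤ 8) :
    (1 + τ) ^ n * exp (-(n * τ)) ≤ exp (-(n * τ ^ 2 / 16)) :=
  calc (1 + τ) ^ n * exp (-(n * τ)) ≤ exp (τ - τ ^ 2 / 16) ^ n * exp (-(n * τ)) := by
        gcongr
        exact one_add_le_exp_sub_sq_div_sixteen h0 h8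
    _ = exp (-(n * τ ^ 2 / 16)) := by
        rw [← exp_nat_mul, ← exp_add]
        ring_nf

theorem one_add_sqrt_pow_mul_exp_neg_le {n : ℕ} (hn : 0 < n) {α : ℝ}
    (hα : 4 * exp (-(n : ℝ) / 3) < α) (hα3 : α ≤ 3) :
    (1 + √(16 * log (3 / α) / n)) ^ n * exp (-(n * √(16 * log (3 / α) / n))) ≤ α / 3 := by
  have hα0 : 0 < α := (by positivity : 0 < 4 * exp (-(n : ℝ) / 3)).trans hα
  have hn0 : (0 : ℝ) < n := Nat.cast_pos.mpr hn
  have hlog0 : 0 ≤ log (3 / α) := log_nonneg (by rwa [le_div_iff₀ hα0, one_mul])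
  have hlog : log (3 / α) < n / 3 := by
    rw [log_lt_iff_lt_exp (by positivity), div_lt_iff₀ hα0]
    calc (3 : ℝ) < 4 * exp (-(n : ℝ) / 3) * exp (n / 3) := by
          rw [mul_assoc, ← exp_add, neg_div, neg_add_cancel, exp_zero]; norm_num
      _ ≤ exp (n / 3) * α := by rw [mul_comm]; gcongr
  set τ := √(16 * log (3 / α) / n)
  have hτsq : τ ^ 2 = 16 * log (3 / α) / n := sq_sqrt (by positivity)
  have hτ8 : τ ≤ 8 := by
    have : τ ^ 2 ≤ 64 := by rw [hτsq, div_le_iff₀ hn0]; linarith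
    nlinarith [sqrt_nonneg (16 * log (3 / α) / n)]
  calc (1 + τ) ^ n * exp (-(n * τ)) ≤ exp (-(n * τ ^ 2 / 16)) :=
        one_add_pow_mul_exp_neg_le n (sqrt_nonneg _) hτ8
    _ = α / 3 := by
        rw [hτsq, show (n : ℝ) * (16 * log (3 / α) / n) / 16 = log (3 / α) by field_simp,
          exp_neg, exp_log (by positivity), inv_div]

theorem MeasureTheory.Measure.isOpenPosMeasure_withDensity {X : Type*} [TopologicalSpace X]
    [MeasurableSpace X] (μ : Measure X) [μ.IsOpenPosMeasure] {f : X → ℝ≥0∞}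
    (hf : AEMeasurable f μ) (hpos : ∀ x, f x ≠ 0) : (μ.withDensity f).IsOpenPosMeasure :=
  ⟨fun U hU hne h => hU.measure_ne_zero μ hne <| by
    rwa [withDensity_apply_eq_zero' hf, show {x | f x ≠ 0} = univ from eq_univ_of_forall hpos,
      univ_inter] at h⟩

theorem setOf_le_subset_of_measure_le {X : Type*} [TopologicalSpace X] [PreconnectedSpace X]
    [MeasurableSpace X] [OpensMeasurableSpace X] (μ : Measure X) [IsFiniteMeasure μ]
    [μ.IsOpenPosMeasure] {f : X → ℝ} (hf : Continuous f) {a : X} {s t : ℝ} (ha : f a ≤ s)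
    (hμ : μ {x | f x ≤ t} ≤ μ {x | f x ≤ s}) : {x | f x ≤ t} ⊆ {x | f x ≤ s} := by
  refine fun x (hxt : f x ≤ t) => not_lt.1 fun hxs : s < f x => ?_
  obtain ⟨y, hy⟩ := intermediate_value_univ a x hf
    (⟨by linarith, by linarith⟩ : (s + f x) / 2 ∈ Icc (f a) (f x))
  have hpos : 0 < μ (f ⁻¹' Ioo s t) := (isOpen_Ioo.preimage hf).measure_pos μ
    ⟨y, by rw [mem_preimage, hy, mem_Ioo]; constructor <;> linarith⟩
  have hst : {x | f x ≤ s} ⊆ {x | f x ≤ t} := fun z (hz : f z ≤ s) => hz.trans (hxs.le.trans hxt)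
  have hnull : μ ({x | f x ≤ t} \ {x | f x ≤ s}) = 0 := by
    rw [measure_sdiff hst
      (measurableSet_le hf.measurable measurable_const).nullMeasurableSet (measure_ne_top μ _),
      tsub_eq_zero_of_le hμ]
  exact hpos.ne' (measure_mono_null (fun z hz => mem_sdiff_of_mem hz.2.le (not_le.2 hz.1)) hnull)

theorem conservative_credible_region_general
    (n : ℕ) (hn : 0 < n)
    (g : (Fin n → ℝ) → ℝ) (hg : ConvexOn ℝ Set.univ g)
    (Z : ℝ) (hZpos : 0 < Z)
    (μ : Measure (Fin n → ℝ)) [IsProbabilityMeasure μ]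
    (hdens : μ = (volume : Measure (Fin n → ℝ)).withDensity
        (fun x => ENNReal.ofReal (Real.exp (-g x) / Z)))
    (xhat : Fin n → ℝ)
    (α : ℝ) (hα : α ∈ Set.Ioo (4 * Real.exp (-(n:ℝ)/3)) 1)
    (γα : ℝ) (hγα : (μ {x | g x ≤ γα}).toReal = 1 - α) :
    (μ {x | g x ≤ g xhat + n * (Real.sqrt (16 * Real.log (3/α) / n) + 1)}).toReal
        ≥ 1 - α
    ∧ {x | g x ≤ γα}
        ⊆ {x | g x ≤ g xhat + n * (Real.sqrt (16 * Real.log (3/α) / n) + 1)} := by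
  have hgc : Continuous g := continuousOn_univ.mp (hg.continuousOn isOpen_univ)
  have hα0 : 0 < α := (by positivity : 0 < 4 * exp (-(n : ℝ) / 3)).trans hα.1
  have hrate := one_add_sqrt_pow_mul_exp_neg_le hn hα.1 (by linarith [hα.2])
  set τ := √(16 * log (3 / α) / n)
  have hτ : 0 ≤ τ := sqrt_nonneg _
  have htail : μ {x | g xhat + n * (τ + 1) < g x} ≤ ENNReal.ofReal α := by
    have h := hg.withDensity_exp_neg_div_tail_le (μ := volume) hgc xhat (c := τ + 1)
      (by linarith) hZpos (n * (τ + 1))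
    rw [← hdens, measure_univ, mul_one, finrank_fin_fun,
      show n * (τ + 1) * (τ + 1 - 1) / (τ + 1) = n * τ by field_simp; ring] at h
    refine h.trans (ENNReal.ofReal_le_ofReal ?_)
    rw [add_comm τ]
    linarith
  have hcover : (μ {x | g x ≤ g xhat + n * (τ + 1)}).toReal ≥ 1 - α := by
    have hcompl : {x | g x ≤ g xhat + n * (τ + 1)} = {x | g xhat + n * (τ + 1) < g x}ᶜ := by
      ext x
      simp only [mem_compl_iff, mem_ofPred_eq, not_lt]
    rw [← measureReal_def, hcompl,
      probReal_compl_eq_one_sub (measurableSet_lt measurable_const hgc.measurable)]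
    linarith [measureReal_def μ _ ▸ ENNReal.toReal_le_of_le_ofReal hα0.le htail]
  have : μ.IsOpenPosMeasure := hdens ▸ volume.isOpenPosMeasure_withDensity
    (by fun_prop) (fun x => by positivity)
  refine ⟨hcover, setOf_le_subset_of_measure_le μ hgc (a := xhat)
    (le_add_of_nonneg_right (by positivity)) ?_⟩
  exact (ENNReal.toReal_le_toReal (measure_ne_top _ _) (measure_ne_top _ _)).1 (hγα ▸ hcover)

/-- Theorem 3.1 of the paper: under the Bobkov–Madiman concentration inequality
and the mean bound `E[g] ≤ g(x̂) + n`, the set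
`C̃_α = {x : g x ≤ g x̂ + n(τ_α + 1)}` with `τ_α = √(16 log(3/α)/n)` has
posterior probability at least `1 − α` and contains the HPD region
`C*_α = {x : g x ≤ γ_α}`. -/
theorem conservative_credible_region
    (n : ℕ) (hn : 0 < n)
    (g : (Fin n → ℝ) → ℝ) (hg : ConvexOn ℝ Set.univ g) (hgm : Measurable g)
    (Z : ℝ) (hZpos : 0 < Z)
    (μ : Measure (Fin n → ℝ)) [IsProbabilityMeasure μ]
    (hdens : μ = (volume : Measure (Fin n → ℝ)).withDensity
        (fun x => ENNReal.ofReal (Real.exp (-g x) / Z)))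
    (xhat : Fin n → ℝ) (hmin : ∀ x, g xhat ≤ g x)
    (hint : Integrable g μ)
    (hconc : ∀ τ : ℝ, τ ∈ Set.Icc (0:ℝ) 2 →
      (μ {x | g x ≥ (∫ x', g x' ∂μ) + τ * n}).toReal
        ≤ 3 * Real.exp (-τ^2 * n / 16))
    (hmeanbd : (∫ x, g x ∂μ) ≤ g xhat + n)
    (α : ℝ) (hα : α ∈ Set.Ioo (4 * Real.exp (-(n:ℝ)/3)) 1)
    (γα : ℝ) (hγα : (μ {x | g x ≤ γα}).toReal = 1 - α) :
    (μ {x | g x ≤ g xhat + n * (Real.sqrt (16 * Real.log (3/α) / n) + 1)}).toReal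
        ≥ 1 - α
    ∧ {x | g x ≤ γα}
        ⊆ {x | g x ≤ g xhat + n * (Real.sqrt (16 * Real.log (3/α) / n) + 1)} :=
  conservative_credible_region_general n hn g hg Z hZpos μ hdens xhat α hα γα hγα
end

section
/- Marginals of log-concave densities are log-concave: if p(x̄, x̲) is a log-concave probability density on ℝᵐ × ℝ^{n−m}, then the marginal density p̄(x̄) = ∫ p(x̄, x̲) dx̲ is log-concave on ℝᵐ. -/
/-!
The marginal `M x = ∫ p (x, w) dw` inherits log-concavity from the Prékopa–Leindler inequality
on `ℝᵏ`, applied to the slices `p (u, ·)`, `p (v, ·)` and `p ((1 - t) • u + t • v, ·)`.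

On `ℝ`, Prékopa–Leindler follows from the Brunn–Minkowski inequality
`(1 - t) |A| + t |B| ≤ |(1 - t) A + t B|` applied to superlevel sets: once `f` and `g` are
rescaled to a common supremum, `(1 - t) {f > s} + t {g > s} ⊆ {h > s}` for every `s`, and the
layer-cake formula and the weighted AM–GM inequality give the claim. The inequality passes to
products by Tonelli's theorem, hence to `ℝᵏ`.

The Bochner integral of a non-integrable slice is `0`, so one also needs `M < ∞` everywhere:
if `M x₀ = ∞`, log-concavity forces `M = ∞` on the image of `{M ≠ 0}` under the homothety of
ratio `1 / 2` about `x₀`, a set of positive measure, contradicting `∫ M = 1`.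
-/

open MeasureTheory Real

open Set Pointwise ENNReal

namespace ENNReal

theorem min_le_rpow_mul_rpow (x y : ℝ≥0∞) {t : ℝ} (ht : t ∈ Icc (0 : ℝ) 1) :
    min x y ≤ x ^ (1 - t) * y ^ t :=
  calc min x y = min x y ^ (1 - t) * min x y ^ t := by
        rw [← rpow_add_of_nonneg _ _ (sub_nonneg.2 ht.2) ht.1, sub_add_cancel, rpow_one]
    _ ≤ x ^ (1 - t) * y ^ t := by
        gcongr
        exacts [sub_nonneg.2 ht.2, min_le_left x y, ht.1, min_le_right x y]

theorem geom_mean_le_arith_mean2_weighted (x y : ℝ≥0∞) {t : ℝ} (ht : t ∈ Ioo (0 : ℝ) 1) :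
    x ^ (1 - t) * y ^ t ≤ ENNReal.ofReal (1 - t) * x + ENNReal.ofReal t * y := by
  have h1t : 0 < 1 - t := sub_pos.2 ht.2
  rcases eq_or_ne x ⊤ with rfl | hx
  · simp [ht.2]
  rcases eq_or_ne y ⊤ with rfl | hy
  · simp [ht.1]
  rw [← ofReal_toReal hx, ← ofReal_toReal hy, ofReal_rpow_of_nonneg toReal_nonneg h1t.le,
    ofReal_rpow_of_nonneg toReal_nonneg ht.1.le, ← ofReal_mul (by positivity),
    ← ofReal_mul h1t.le, ← ofReal_mul ht.1.le,
    ← ofReal_add (mul_nonneg h1t.le toReal_nonneg) (mul_nonneg ht.1.le toReal_nonneg)]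
  exact ofReal_le_ofReal (Real.geom_mean_le_arith_mean2_weighted h1t.le ht.1.le toReal_nonneg
    toReal_nonneg (sub_add_cancel 1 t))

end ENNReal

theorem Real.volume_Ioi_inter_ofReal_lt (c : ℝ≥0∞) :
    volume (Ioi (0 : ℝ) ∩ {s | ENNReal.ofReal s < c}) = c := by
  rcases eq_or_ne c ⊤ with rfl | hc
  · simp
  have : Ioi (0 : ℝ) ∩ {s | ENNReal.ofReal s < c} = Ioo 0 c.toReal := by
    ext s
    simp +contextual [ofReal_lt_iff_lt_toReal, le_of_lt, hc]
  rw [this, Real.volume_Ioo, sub_zero, ofReal_toReal hc]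

theorem lintegral_eq_lintegral_meas_ofReal_lt {α : Type*} [MeasurableSpace α] (μ : Measure α)
    [SFinite μ] {f : α → ℝ≥0∞} (hf : Measurable f) :
    ∫⁻ x, f x ∂μ = ∫⁻ s in Ioi 0, μ {x | ENNReal.ofReal s < f x} := by
  have hmeas : MeasurableSet {p : α × ℝ | ENNReal.ofReal p.2 < f p.1} :=
    measurableSet_lt (ENNReal.measurable_ofReal.comp measurable_snd) (hf.comp measurable_fst)
  calc ∫⁻ x, f x ∂μ
      = ∫⁻ x, (∫⁻ s in Ioi (0 : ℝ), {s | ENNReal.ofReal s < f x}.indicator 1 s) ∂μ := by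
        refine lintegral_congr fun x => ?_
        rw [lintegral_indicator_one (measurableSet_lt ENNReal.measurable_ofReal measurable_const),
          Measure.restrict_apply' measurableSet_Ioi, inter_comm, Real.volume_Ioi_inter_ofReal_lt]
    _ = ∫⁻ s in Ioi 0, ∫⁻ x, {x | ENNReal.ofReal s < f x}.indicator 1 x ∂μ :=
        lintegral_lintegral_swap (f := fun x s => {s | ENNReal.ofReal s < f x}.indicator 1 s)
          (measurable_one.indicator hmeas).aemeasurable
    _ = ∫⁻ s in Ioi 0, μ {x | ENNReal.ofReal s < f x} :=
        lintegral_congr fun s => lintegral_indicator_one (measurableSet_lt measurable_const hf)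

theorem iSup_lintegral_min_natCast {α : Type*} [MeasurableSpace α] (μ : Measure α)
    {f : α → ℝ≥0∞} (hf : Measurable f) : ⨆ n : ℕ, ∫⁻ x, min (f x) n ∂μ = ∫⁻ x, f x ∂μ := by
  rw [← lintegral_iSup (fun n => hf.min measurable_const)
    fun n m hnm x => min_le_min_left _ (Nat.cast_le.2 hnm)]
  refine lintegral_congr fun x => ?_
  rw [← inf_iSup_eq, iSup_natCast, inf_top_eq]

namespace Real

theorem volume_add_volume_le_volume_add_of_isCompact {K L : Set ℝ} (hK : IsCompact K)
    (hL : IsCompact L) (hK' : K.Nonempty) (hL' : L.Nonempty) :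
    volume K + volume L ≤ volume (K + L) := by
  set a := sSup K
  set b := sInf L
  have hsub : (b +ᵥ K) ∪ (a +ᵥ L) ⊆ K + L := by
    refine union_subset ?_ (vadd_set_subset_add (hK.sSup_mem hK'))
    rintro _ ⟨x, hx, rfl⟩
    simpa only [vadd_eq_add, add_comm b] using add_mem_add hx (hL.sInf_mem hL')
  -- `b +ᵥ K` lies to the left of `a + b` and `a +ᵥ L` to its right
  have hinter : (b +ᵥ K) ∩ (a +ᵥ L) ⊆ {a + b} := by
    rintro _ ⟨⟨x, hx, rfl⟩, ⟨y, hy, hxy⟩⟩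
    have := le_csSup hK.bddAbove hx
    have := csInf_le hL.bddBelow hy
    simp only [vadd_eq_add, mem_singleton_iff] at hxy ⊢
    linarith
  calc volume K + volume L = volume (b +ᵥ K) + volume (a +ᵥ L) := by
        rw [measure_vadd, measure_vadd]
    _ = volume ((b +ᵥ K) ∪ (a +ᵥ L)) + volume ((b +ᵥ K) ∩ (a +ᵥ L)) :=
        (measure_union_add_inter _ (hL.measurableSet.const_vadd a)).symm
    _ ≤ volume (K + L) := by
        rw [measure_mono_null hinter (measure_singleton _), add_zero]
        exact measure_mono hsub

theorem volume_add_volume_le_volume_add {A B : Set ℝ} (hA : MeasurableSet A)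
    (hB : MeasurableSet B) (hA' : A.Nonempty) (hB' : B.Nonempty) :
    volume A + volume B ≤ volume (A + B) := by
  obtain ⟨a, ha⟩ := hA'
  obtain ⟨b, hb⟩ := hB'
  rw [hA.measure_eq_iSup_isCompact, hB.measure_eq_iSup_isCompact]
  simp only [iSup_and']
  refine ENNReal.biSup_add_biSup_le (s := {K | K ⊆ A ∧ IsCompact K})
    (t := {L | L ⊆ B ∧ IsCompact L}) ⟨∅, empty_subset _, isCompact_empty⟩
    ⟨∅, empty_subset _, isCompact_empty⟩ fun K ⟨hKA, hK⟩ L ⟨hLB, hL⟩ => ?_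
  calc volume K + volume L ≤ volume (insert a K) + volume (insert b L) := by
        gcongr <;> exact subset_insert _ _
    _ ≤ volume (insert a K + insert b L) :=
        volume_add_volume_le_volume_add_of_isCompact (hK.insert a) (hL.insert b)
          (insert_nonempty a K) (insert_nonempty b L)
    _ ≤ volume (A + B) :=
        measure_mono (add_subset_add (insert_subset ha hKA) (insert_subset hb hLB))

theorem ofReal_mul_volume_add_le_volume_smul_add_smul {A B : Set ℝ} (hA : MeasurableSet A)
    (hB : MeasurableSet B) (hA' : A.Nonempty) (hB' : B.Nonempty) {t : ℝ}
    (ht : t ∈ Icc (0 : ℝ) 1) :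
    ENNReal.ofReal (1 - t) * volume A + ENNReal.ofReal t * volume B
      ≤ volume ((1 - t) • A + t • B) := by
  have := volume_add_volume_le_volume_add (hA.const_smul₀ (1 - t)) (hB.const_smul₀ t)
    (hA'.smul_set) (hB'.smul_set)
  rwa [Measure.addHaar_smul, Measure.addHaar_smul, Module.finrank_self, pow_one, pow_one,
    abs_of_nonneg (sub_nonneg.2 ht.2), abs_of_nonneg ht.1] at this

theorem ofReal_mul_lintegral_add_le_lintegral_of_iSup_eq {f g h : ℝ → ℝ≥0∞}
    (hf : Measurable f) (hg : Measurable g) (hh : Measurable h) (hfg : ⨆ x, f x = ⨆ y, g y)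
    {t : ℝ} (ht : t ∈ Icc (0 : ℝ) 1) (hfgh : ∀ x y, min (f x) (g y) ≤ h ((1 - t) • x + t • y)) :
    ENNReal.ofReal (1 - t) * (∫⁻ x, f x) + ENNReal.ofReal t * ∫⁻ x, g x ≤ ∫⁻ x, h x := by
  have hlevel : ∀ s : ℝ, ENNReal.ofReal (1 - t) * volume {x | ENNReal.ofReal s < f x}
      + ENNReal.ofReal t * volume {y | ENNReal.ofReal s < g y}
      ≤ volume {z | ENNReal.ofReal s < h z} := by
    intro s
    by_cases hs : ENNReal.ofReal s < ⨆ x, f x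
    · have hs' : ENNReal.ofReal s < ⨆ y, g y := hfg ▸ hs
      refine (ofReal_mul_volume_add_le_volume_smul_add_smul (measurableSet_lt measurable_const hf)
        (measurableSet_lt measurable_const hg) (lt_iSup_iff.1 hs) (lt_iSup_iff.1 hs')
        ht).trans (measure_mono ?_)
      rintro _ ⟨_, ⟨x, hx, rfl⟩, _, ⟨y, hy, rfl⟩, rfl⟩
      exact (lt_min hx hy).trans_le (hfgh x y)
    · have hf_empty : {x | ENNReal.ofReal s < f x} = ∅ :=
        eq_empty_of_forall_notMem fun x hx => hs (hx.trans_le (le_iSup f x))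
      have hg_empty : {y | ENNReal.ofReal s < g y} = ∅ :=
        eq_empty_of_forall_notMem fun y hy => hs (hfg ▸ hy.trans_le (le_iSup g y))
      simp [hf_empty, hg_empty]
  rw [lintegral_eq_lintegral_meas_ofReal_lt volume hf,
    lintegral_eq_lintegral_meas_ofReal_lt volume hg,
    lintegral_eq_lintegral_meas_ofReal_lt volume hh, ← lintegral_const_mul' _ _ ofReal_ne_top,
    ← lintegral_const_mul' _ _ ofReal_ne_top]
  exact (le_lintegral_add _ _).trans (lintegral_mono fun s => hlevel s)

theorem rpow_lintegral_mul_rpow_lintegral_le_of_iSup_ne_top {f g h : ℝ → ℝ≥0∞}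
    (hf : Measurable f) (hg : Measurable g) (hh : Measurable h) {t : ℝ} (ht : t ∈ Ioo (0 : ℝ) 1)
    (hf_top : ⨆ x, f x ≠ ⊤) (hg_top : ⨆ x, g x ≠ ⊤)
    (hfgh : ∀ x y, f x ^ (1 - t) * g y ^ t ≤ h ((1 - t) • x + t • y)) :
    (∫⁻ x, f x) ^ (1 - t) * (∫⁻ x, g x) ^ t ≤ ∫⁻ x, h x := by
  have h1t : 0 < 1 - t := sub_pos.2 ht.2
  set a := ⨆ x, f x
  set b := ⨆ x, g x
  rcases eq_or_ne a 0 with ha | ha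
  · simp [ENNReal.iSup_eq_zero.1 ha, zero_rpow_of_pos h1t]
  rcases eq_or_ne b 0 with hb | hb
  · simp [ENNReal.iSup_eq_zero.1 hb, zero_rpow_of_pos ht.1]
  -- rescaling `f` by `b` and `g` by `a` gives both the supremum `a * b`
  have hscale (x y : ℝ≥0∞) :
      (b * x) ^ (1 - t) * (a * y) ^ t = b ^ (1 - t) * a ^ t * (x ^ (1 - t) * y ^ t) := by
    rw [mul_rpow_of_nonneg _ _ h1t.le, mul_rpow_of_nonneg _ _ ht.1.le]
    ring
  set c := b ^ (1 - t) * a ^ t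
  have hc0 : c ≠ 0 := mul_ne_zero (rpow_pos (pos_iff_ne_zero.2 hb) hg_top).ne'
    (rpow_pos (pos_iff_ne_zero.2 ha) hf_top).ne'
  have hc_top : c ≠ ⊤ :=
    mul_ne_top (rpow_ne_top_of_nonneg h1t.le hg_top) (rpow_ne_top_of_nonneg ht.1.le hf_top)
  have hsum := ofReal_mul_lintegral_add_le_lintegral_of_iSup_eq (hf.const_mul b)
    (hg.const_mul a) (hh.const_mul c)
    (by rw [← ENNReal.mul_iSup, ← ENNReal.mul_iSup, mul_comm]) ⟨ht.1.le, ht.2.le⟩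
    fun x y => (min_le_rpow_mul_rpow _ _ ⟨ht.1.le, ht.2.le⟩).trans
      (by rw [hscale]; gcongr; exact hfgh x y)
  rw [lintegral_const_mul' _ _ hg_top, lintegral_const_mul' _ _ hf_top,
    lintegral_const_mul' _ _ hc_top] at hsum
  have := (ENNReal.geom_mean_le_arith_mean2_weighted _ _ ht).trans hsum
  rwa [hscale, ENNReal.mul_le_mul_iff_right hc0 hc_top] at this

theorem rpow_lintegral_mul_rpow_lintegral_le {f g h : ℝ → ℝ≥0∞} (hf : Measurable f)
    (hg : Measurable g) (hh : Measurable h) {t : ℝ} (ht : t ∈ Ioo (0 : ℝ) 1)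
    (hfgh : ∀ x y, f x ^ (1 - t) * g y ^ t ≤ h ((1 - t) • x + t • y)) :
    (∫⁻ x, f x) ^ (1 - t) * (∫⁻ x, g x) ^ t ≤ ∫⁻ x, h x := by
  have h1t : 0 < 1 - t := sub_pos.2 ht.2
  have hrpow_iSup (u : ℕ → ℝ≥0∞) {p : ℝ} (hp : 0 < p) : (⨆ n, u n) ^ p = ⨆ n, u n ^ p :=
    (orderIsoRpow p hp).map_iSup u
  have htrunc_mono (u : ℝ → ℝ≥0∞) : Monotone fun (n : ℕ) x => min (u x) n :=
    fun n m hnm x => min_le_min_left _ (Nat.cast_le.2 hnm)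
  have htrunc_top (u : ℝ → ℝ≥0∞) (n : ℕ) : ⨆ x, min (u x) n ≠ ⊤ :=
    ne_top_of_le_ne_top (natCast_ne_top n) (iSup_le fun x => min_le_right _ _)
  rw [← iSup_lintegral_min_natCast volume hf, ← iSup_lintegral_min_natCast volume hg,
    hrpow_iSup _ h1t, hrpow_iSup _ ht.1, ENNReal.iSup_mul]
  refine iSup_le fun n => ?_
  rw [ENNReal.mul_iSup]
  refine iSup_le fun m => ?_
  calc (∫⁻ x, min (f x) n) ^ (1 - t) * (∫⁻ x, min (g x) m) ^ t
      ≤ (∫⁻ x, min (f x) ↑(max n m)) ^ (1 - t) * (∫⁻ x, min (g x) ↑(max n m)) ^ t :=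
        mul_le_mul'
          (ENNReal.rpow_le_rpow (lintegral_mono (htrunc_mono f (le_max_left n m))) h1t.le)
          (ENNReal.rpow_le_rpow (lintegral_mono (htrunc_mono g (le_max_right n m))) ht.1.le)
    _ ≤ ∫⁻ x, h x :=
        rpow_lintegral_mul_rpow_lintegral_le_of_iSup_ne_top (hf.min measurable_const)
          (hg.min measurable_const) hh ht (htrunc_top f _) (htrunc_top g _) fun x y =>
            (mul_le_mul' (ENNReal.rpow_le_rpow (min_le_left _ _) h1t.le)
              (ENNReal.rpow_le_rpow (min_le_left _ _) ht.1.le)).trans (hfgh x y)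

end Real

def PrekopaLeindler {E : Type*} [AddCommMonoid E] [Module ℝ E] [MeasurableSpace E]
    (μ : Measure E) : Prop :=
  ∀ ⦃f g h : E → ℝ≥0∞⦄, Measurable f → Measurable g → Measurable h →
    ∀ ⦃t : ℝ⦄, t ∈ Icc (0 : ℝ) 1 → (∀ x y, f x ^ (1 - t) * g y ^ t ≤ h ((1 - t) • x + t • y)) →
      (∫⁻ x, f x ∂μ) ^ (1 - t) * (∫⁻ x, g x ∂μ) ^ t ≤ ∫⁻ x, h x ∂μ

theorem Real.prekopaLeindler_volume : PrekopaLeindler (volume : Measure ℝ) := by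
  intro f g h hf hg hh t ht hfgh
  rcases ht.1.eq_or_lt with rfl | ht0
  · simpa using lintegral_mono fun x => by simpa using hfgh x x
  rcases ht.2.eq_or_lt with rfl | ht1
  · simpa using lintegral_mono fun y => by simpa using hfgh y y
  exact rpow_lintegral_mul_rpow_lintegral_le hf hg hh ⟨ht0, ht1⟩ hfgh

namespace PrekopaLeindler

variable {E F : Type*} [AddCommMonoid E] [Module ℝ E] [MeasurableSpace E]
  [AddCommMonoid F] [Module ℝ F] [MeasurableSpace F]

theorem dirac (x₀ : E) : PrekopaLeindler (Measure.dirac x₀) := by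
  intro f g h hf hg hh t ht hfgh
  rw [lintegral_dirac' _ hf, lintegral_dirac' _ hg, lintegral_dirac' _ hh]
  simpa only [Convex.combo_self (sub_add_cancel 1 t)] using hfgh x₀ x₀

theorem of_measurePreserving {μ : Measure E} {ν : Measure F} (hμ : PrekopaLeindler μ)
    (e : E →ₗ[ℝ] F) (he : MeasurePreserving e μ ν) : PrekopaLeindler ν := by
  intro f g h hf hg hh t ht hfgh
  rw [← he.lintegral_comp hf, ← he.lintegral_comp hg, ← he.lintegral_comp hh]
  exact hμ (hf.comp he.measurable) (hg.comp he.measurable) (hh.comp he.measurable) ht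
    fun x y => by simpa using hfgh (e x) (e y)

theorem fiberwise {ν : Measure F} (hν : PrekopaLeindler ν) {f g h : E × F → ℝ≥0∞}
    (hf : Measurable f) (hg : Measurable g) (hh : Measurable h) {t : ℝ} (ht : t ∈ Icc (0 : ℝ) 1)
    (hfgh : ∀ p q, f p ^ (1 - t) * g q ^ t ≤ h ((1 - t) • p + t • q)) (x₁ x₂ : E) :
    (∫⁻ y, f (x₁, y) ∂ν) ^ (1 - t) * (∫⁻ y, g (x₂, y) ∂ν) ^ t
      ≤ ∫⁻ y, h ((1 - t) • x₁ + t • x₂, y) ∂ν :=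
  hν (hf.comp measurable_prodMk_left) (hg.comp measurable_prodMk_left)
    (hh.comp measurable_prodMk_left) ht fun y₁ y₂ => by simpa using hfgh (x₁, y₁) (x₂, y₂)

theorem prod {μ : Measure E} {ν : Measure F} [SFinite ν] (hμ : PrekopaLeindler μ)
    (hν : PrekopaLeindler ν) : PrekopaLeindler (μ.prod ν) := by
  intro f g h hf hg hh t ht hfgh
  rw [lintegral_prod _ hf.aemeasurable, lintegral_prod _ hg.aemeasurable,
    lintegral_prod _ hh.aemeasurable]
  exact hμ hf.lintegral_prod_right' hg.lintegral_prod_right' hh.lintegral_prod_right' ht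
    (hν.fiberwise hf hg hh ht hfgh)

end PrekopaLeindler

theorem measurePreserving_finConsLinearEquiv (n : ℕ) :
    MeasurePreserving (Fin.consLinearEquiv ℝ fun _ : Fin (n + 1) => ℝ) := by
  convert (volume_preserving_piFinSuccAbove (fun _ : Fin (n + 1) => ℝ) 0).symm using 1
  ext p : 1
  exact (Fin.insertNth_zero' _ _).symm

theorem prekopaLeindler_volume_pi : ∀ n, PrekopaLeindler (volume : Measure (Fin n → ℝ))
  | 0 => by
    rw [volume_pi, Measure.pi_of_empty]
    exact .dirac _
  | n + 1 => (Real.prekopaLeindler_volume.prod (prekopaLeindler_volume_pi n)).of_measurePreserving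
      (Fin.consLinearEquiv ℝ fun _ => ℝ).toLinearMap (measurePreserving_finConsLinearEquiv n)

def IsLogConcave {E : Type*} [AddCommMonoid E] [Module ℝ E] (f : E → ℝ≥0∞) : Prop :=
  ∀ x y, ∀ t ∈ Icc (0 : ℝ) 1, f x ^ (1 - t) * f y ^ t ≤ f ((1 - t) • x + t • y)

namespace IsLogConcave

theorem lintegral_prod_right {E F : Type*} [AddCommMonoid E] [Module ℝ E] [MeasurableSpace E]
    [AddCommMonoid F] [Module ℝ F] [MeasurableSpace F] {ν : Measure F} (hν : PrekopaLeindler ν)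
    {P : E × F → ℝ≥0∞} (hP : IsLogConcave P) (hPm : Measurable P) :
    IsLogConcave fun x => ∫⁻ y, P (x, y) ∂ν :=
  fun x₁ x₂ t ht => hν.fiberwise hPm hPm hPm ht (fun p q => hP p q t ht) x₁ x₂

theorem ne_top {E : Type*} [NormedAddCommGroup E] [NormedSpace ℝ E] [MeasurableSpace E]
    [BorelSpace E] [FiniteDimensional ℝ E] {μ : Measure E} [μ.IsAddHaarMeasure]
    {M : E → ℝ≥0∞} (hM : IsLogConcave M) (hMm : Measurable M) (h0 : ∫⁻ x, M x ∂μ ≠ 0)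
    (htop : ∫⁻ x, M x ∂μ ≠ ⊤) (x₀ : E) : M x₀ ≠ ⊤ := by
  intro hx₀
  have hnull : μ {x | M x = ⊤} = 0 := by simpa [ae_iff] using ae_lt_top hMm htop
  have hpos : μ {x | M x ≠ 0} ≠ 0 := fun h => h0 ((lintegral_eq_zero_iff hMm).2 (ae_iff.2 h))
  have himage : AffineMap.homothety x₀ (1 / 2 : ℝ) '' {x | M x ≠ 0} ⊆ {x | M x = ⊤} := by
    rintro _ ⟨x, hx, rfl⟩
    have := hM x₀ x (1 / 2) ⟨by norm_num, by norm_num⟩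
    rw [hx₀, top_rpow_of_pos (by norm_num), top_mul (by simpa using hx)] at this
    rw [AffineMap.homothety_eq_lineMap, AffineMap.lineMap_apply_module]
    exact top_le_iff.1 this
  have := measure_mono_null himage hnull
  rw [Measure.addHaar_image_homothety] at this
  simp [hpos] at this

end IsLogConcave

/-- Prékopa–Leindler marginalization: the marginal of a log-concave
probability density is log-concave. -/
theorem marginal_of_logConcave
    (m k : ℕ)
    (p : (Fin m → ℝ) × (Fin k → ℝ) → ℝ)
    (hp_nonneg : ∀ z, 0 ≤ p z)
    (hp_meas : Measurable p)
    (hp_prob : ∫ z : (Fin m → ℝ) × (Fin k → ℝ), p z = 1)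
    (hp_logconcave : ∀ u v : (Fin m → ℝ) × (Fin k → ℝ), ∀ t : ℝ,
      t ∈ Set.Icc (0:ℝ) 1 →
        p ((1 - t) • u + t • v) ≥ p u ^ (1 - t) * p v ^ t) :
    ∀ u v : Fin m → ℝ, ∀ t : ℝ, t ∈ Set.Icc (0:ℝ) 1 →
      (∫ w : Fin k → ℝ, p ((1 - t) • u + t • v, w))
        ≥ (∫ w : Fin k → ℝ, p (u, w)) ^ (1 - t)
            * (∫ w : Fin k → ℝ, p (v, w)) ^ t := by
  intro u v t ht
  set P := fun z => ENNReal.ofReal (p z)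
  have hPm : Measurable P := hp_meas.ennreal_ofReal
  have hP : IsLogConcave P := fun x y s hs => by
    simp only [P]
    rw [ofReal_rpow_of_nonneg (hp_nonneg x) (sub_nonneg.2 hs.2),
      ofReal_rpow_of_nonneg (hp_nonneg y) hs.1, ← ofReal_mul (rpow_nonneg (hp_nonneg x) _)]
    exact ofReal_le_ofReal (hp_logconcave x y s hs)
  have hM := hP.lintegral_prod_right (prekopaLeindler_volume_pi k) hPm
  have hM_one : ∫⁻ x, ∫⁻ w, P (x, w) = 1 := by
    have hp_int : Integrable p := by
      by_contra h
      simp [integral_undef h] at hp_prob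
    rw [← lintegral_prod _ hPm.aemeasurable, ← Measure.volume_eq_prod,
      ← ofReal_integral_eq_lintegral_ofReal hp_int (.of_forall hp_nonneg), hp_prob, ofReal_one]
  have hM_top := hM.ne_top (μ := volume) hPm.lintegral_prod_right' (by simp [hM_one])
    (by simp [hM_one])
  have hslice (x : Fin m → ℝ) : ∫ w, p (x, w) = (∫⁻ w, P (x, w)).toReal :=
    integral_eq_lintegral_of_nonneg_ae (.of_forall fun w => hp_nonneg _)
      (hp_meas.comp measurable_prodMk_left).aestronglyMeasurable
  simp only [hslice, toReal_rpow, ← toReal_mul]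
  exact toReal_mono (hM_top _) (hM u v t ht)
end
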